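/- Under conditions (A1*), (A3*), (A4*) and (A8*), there exists a constant C > 0 such that for all sufficiently large n and every unit vector b ∈ ℝ^{R Σ_{d=1}^D p_d}, b^T M̃_n(β_0) b ≥ C n; equivalently, λ_min(M̃_n(β_0)) ≥ C n, so that λ_min^{−1}(M̃_n(β_0)) = O(n^{−1}). Here M̃_n(β) = Σ_{i=1}^n J(β)^T vec(X_i) A_i^{1/2}(β) R̃^{−1} R_0 R̃^{−1} A_i^{1/2}(β) vec(X_i)^T J(β), which equals Var(s̃_n(β_0)) when evaluated at β_0. -/

import Mathlib

/-!
Common definitions for the tensor GEE setting of Zhang, Li, Zhou, Shen (2014),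
"Tensor generalized estimating equations for longitudinal imaging analysis".
-/

noncomputable section
open MeasureTheory Filter Topology Matrix ProbabilityTheory

namespace TensorGEE

variable {D : ℕ}

/-- Multi-index for a `D`-way tensor of dimensions `p`. -/
abbrev Idx (p : Fin D → ℕ) := (d : Fin D) → Fin (p d)

/-- Index set for the CP parameter `β = vec(B₁,…,B_D) ∈ ℝ^{R Σ_d p_d}`. -/
abbrev PIdx (p : Fin D → ℕ) (R : ℕ) := ((d : Fin D) × Fin (p d)) × Fin R

/-- The CP parameter vector `β`. -/
abbrev Param (p : Fin D → ℕ) (R : ℕ) := PIdx p R → ℝ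

/-- Euclidean norm of a finitely indexed vector. -/
def vnorm {ι : Type*} [Fintype ι] (v : ι → ℝ) : ℝ := Real.sqrt (∑ k, v k ^ 2)

/-- Frobenius norm of a matrix. -/
def frob {ι κ : Type*} [Fintype ι] [Fintype κ] (M : Matrix ι κ ℝ) : ℝ :=
  Real.sqrt (∑ i, ∑ j, M i j ^ 2)

/-- The rank-`R` CP tensor `B = Σ_r β₁⁽ʳ⁾ ∘ ⋯ ∘ β_D⁽ʳ⁾` determined by `β`. -/
def cpTensor {p : Fin D → ℕ} {R : ℕ} (β : Param p R) : Idx p → ℝ :=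
  fun i => ∑ r : Fin R, ∏ d : Fin D, β ⟨⟨d, i d⟩, r⟩

/-- The Jacobian `J(β) = ∂ vec(B)/∂βᵀ = [J₁ ⋯ J_D]`. -/
def Jmat {p : Fin D → ℕ} {R : ℕ} (β : Param p R) : Matrix (Idx p) (PIdx p R) ℝ :=
  fun i k =>
    if i k.1.1 = k.1.2 then ∏ d ∈ Finset.univ.erase k.1.1, β ⟨⟨d, i d⟩, k.2⟩ else 0

/-- The Hessian `H(β, X) = ∂[J(β)ᵀ vec(X)]/∂βᵀ` of the linear systematic part. -/
def Hmat {p : Fin D → ℕ} {R : ℕ} (Xt : Idx p → ℝ) (β : Param p R) :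
    Matrix (PIdx p R) (PIdx p R) ℝ :=
  fun k l => fderiv ℝ (fun b : Param p R => ((Jmat b)ᵀ.mulVec Xt) k) β (Pi.single l 1)

/-- Negative Jacobian `-∂f(β)/∂βᵀ` of a vector field on the parameter space. -/
def negJac {ι : Type*} [Fintype ι] [DecidableEq ι] (f : (ι → ℝ) → ι → ℝ) (β : ι → ℝ) :
    Matrix ι ι ℝ :=
  fun k l => -(fderiv ℝ f β (Pi.single l 1) k)

/-- Largest value of the quadratic form `u ↦ uᵀ M u` over Euclidean-unit vectors
(the largest eigenvalue, for a symmetric matrix). -/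
def lamMaxQF {ι : Type*} [Fintype ι] (M : Matrix ι ι ℝ) : ℝ :=
  sSup {x : ℝ | ∃ u : ι → ℝ, (∑ k, u k ^ 2) = 1 ∧ x = u ⬝ᵥ M.mulVec u}

/-- Smallest value of the quadratic form `u ↦ uᵀ M u` over Euclidean-unit vectors
(the smallest eigenvalue, for a symmetric matrix). -/
def lamMinQF {ι : Type*} [Fintype ι] (M : Matrix ι ι ℝ) : ℝ :=
  sInf {x : ℝ | ∃ u : ι → ℝ, (∑ k, u k ^ 2) = 1 ∧ x = u ⬝ᵥ M.mulVec u}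

variable {m R : ℕ} {p : Fin D → ℕ}

/-- Systematic part `θ = ⟨B, X⟩`. -/
def theta (Xt : Idx p → ℝ) (β : Param p R) : ℝ := ∑ i, cpTensor β i * Xt i

variable (μ : ℝ → ℝ)

/-- `σ²(β) = μ'(θ(β))` (over-dispersion `φ = 1`). -/
def sigma2 (Xt : Idx p → ℝ) (β : Param p R) : ℝ := deriv μ (theta Xt β)

/-- `vec(X_i)`: the matrix with columns `vec(X_{ij})`, `j = 1,…,m`. -/
def vecX (Xi : Fin m → Idx p → ℝ) : Matrix (Idx p) (Fin m) ℝ := fun idx j => Xi j idx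

/-- `A_i^{1/2}(β)`. -/
def Asqrt (Xi : Fin m → Idx p → ℝ) (β : Param p R) : Matrix (Fin m) (Fin m) ℝ :=
  Matrix.diagonal fun j => Real.sqrt (sigma2 μ (Xi j) β)

/-- `A_i^{-1/2}(β)`. -/
def AinvSqrt (Xi : Fin m → Idx p → ℝ) (β : Param p R) : Matrix (Fin m) (Fin m) ℝ :=
  Matrix.diagonal fun j => (Real.sqrt (sigma2 μ (Xi j) β))⁻¹

/-- Mean vector `μ_i(β)`. -/
def muVec (Xi : Fin m → Idx p → ℝ) (β : Param p R) : Fin m → ℝ :=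
  fun j => μ (theta (Xi j) β)

/-- One subject's contribution `J(β)ᵀ vec(X_i) A_i^{1/2}(β) W⁻¹ A_i^{-1/2}(β)(Y_i - μ_i(β))`
to the tensor GEE, with working *inverse* correlation matrix `Winv`. -/
def geeTerm (Xi : Fin m → Idx p → ℝ) (Winv : Matrix (Fin m) (Fin m) ℝ)
    (Yi : Fin m → ℝ) (β : Param p R) : PIdx p R → ℝ :=
  ((Jmat β)ᵀ * vecX Xi * Asqrt μ Xi β * Winv * AinvSqrt μ Xi β).mulVec
    (Yi - muVec μ Xi β)

/-- The tensor GEE function `s_n(β)` with working inverse correlation `Winv`. -/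
def gee (X : ℕ → Fin m → Idx p → ℝ) (Winv : Matrix (Fin m) (Fin m) ℝ)
    (Yv : ℕ → Fin m → ℝ) (n : ℕ) (β : Param p R) : PIdx p R → ℝ :=
  ∑ i ∈ Finset.range n, geeTerm μ (X i) Winv (Yv i) β

/-- The tensor GEE function with an independence working correlation,
`s_init,n(β) = Σ_i J(β)ᵀ vec(X_i)(Y_i − μ_i(β))`. -/
def geeInit (X : ℕ → Fin m → Idx p → ℝ) (Yv : ℕ → Fin m → ℝ) (n : ℕ)
    (β : Param p R) : PIdx p R → ℝ :=
  ∑ i ∈ Finset.range n, ((Jmat β)ᵀ * vecX (X i)).mulVec (Yv i - muVec μ (X i) β)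

/-- `I(β) = n⁻¹ Σ_i J(β)ᵀ vec(X_i) vec(X_i)ᵀ J(β)`. -/
def Imat (X : ℕ → Fin m → Idx p → ℝ) (n : ℕ) (β : Param p R) :
    Matrix (PIdx p R) (PIdx p R) ℝ :=
  (n : ℝ)⁻¹ • ∑ i ∈ Finset.range n, (Jmat β)ᵀ * vecX (X i) * (vecX (X i))ᵀ * Jmat β

/-- `M̃_n(β) = Σ_i J(β)ᵀ vec(X_i) A_i^{1/2} R̃⁻¹ R₀ R̃⁻¹ A_i^{1/2} vec(X_i)ᵀ J(β)`. -/
def Mtilde (X : ℕ → Fin m → Idx p → ℝ) (R0 Rtil : Matrix (Fin m) (Fin m) ℝ)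
    (n : ℕ) (β : Param p R) : Matrix (PIdx p R) (PIdx p R) ℝ :=
  ∑ i ∈ Finset.range n,
    (Jmat β)ᵀ * vecX (X i) * Asqrt μ (X i) β * Rtil⁻¹ * R0 * Rtil⁻¹ *
      Asqrt μ (X i) β * (vecX (X i))ᵀ * Jmat β

/-- `D̃_{n1}(β) = Σ_i J(β)ᵀ vec(X_i) A_i^{1/2} R̃⁻¹ A_i^{1/2} vec(X_i)ᵀ J(β)`. -/
def Dtilde1 (X : ℕ → Fin m → Idx p → ℝ) (Rtil : Matrix (Fin m) (Fin m) ℝ)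
    (n : ℕ) (β : Param p R) : Matrix (PIdx p R) (PIdx p R) ℝ :=
  ∑ i ∈ Finset.range n,
    (Jmat β)ᵀ * vecX (X i) * Asqrt μ (X i) β * Rtil⁻¹ *
      Asqrt μ (X i) β * (vecX (X i))ᵀ * Jmat β

/-- `Z_n = O_p(a_n)`: for every `ε > 0` there is `M` with
`P(‖Z_n‖ > M a_n) ≤ ε` for all sufficiently large `n`. -/
def IsBigOp {Ω : Type*} [MeasurableSpace Ω] (P : Measure Ω) (Z : ℕ → Ω → ℝ)
    (a : ℕ → ℝ) : Prop :=
  ∀ ε : ℝ, 0 < ε → ∃ M : ℝ, ∃ N : ℕ, ∀ n ≥ N,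
    P {ω | M * a n < |Z n ω|} ≤ ENNReal.ofReal ε

/-- Convergence in distribution of real random variables to the law `ν`. -/
def TendstoInDist {Ω : Type*} [MeasurableSpace Ω] (P : Measure Ω) (Z : ℕ → Ω → ℝ)
    (ν : Measure ℝ) : Prop :=
  ∀ f : BoundedContinuousFunction ℝ ℝ,
    Tendsto (fun n => ∫ ω, f (Z n ω) ∂P) atTop (𝓝 (∫ x, f x ∂ν))

end TensorGEE

/-!
Write `S = R̃⁻¹ R₀ R̃⁻¹`, `P_i = vec(X_i)ᵀ J(β₀)` and `A_i = A_i(β₀)`. Then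
`bᵀ M̃_n b = Σ_i (A_i^{1/2} P_i b)ᵀ S (A_i^{1/2} P_i b)`. Since `S` is positive definite it
dominates `λ_min(S) · I`, and (A8*) gives `A_i ≥ a · I`, so
`bᵀ M̃_n b ≥ λ_min(S) a Σ_i ‖P_i b‖² = λ_min(S) a n bᵀ I(β₀) b ≥ λ_min(S) a c₁ n` by (A3*).
-/

namespace Matrix

variable {ι κ : Type*} [Fintype ι] [Fintype κ]

open scoped MatrixOrder in
/-- The spectrum of `S` is a finite set of positive reals, so `c • 1 ≤ S` in the Loewner order
for some `c > 0`. -/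
theorem PosDef.exists_pos_mul_dotProduct_self_le [DecidableEq ι] {S : Matrix ι ι ℝ}
    (hS : S.PosDef) : ∃ c > 0, ∀ v : ι → ℝ, c * (v ⬝ᵥ v) ≤ v ⬝ᵥ S *ᵥ v := by
  rcases isEmpty_or_nonempty ι with hι | hι
  · exact ⟨1, one_pos, fun v => by simp [dotProduct]⟩
  obtain ⟨c, hc, hcS⟩ := (CFC.exists_pos_algebraMap_le_iff hS.isHermitian.isSelfAdjoint).2
    fun x hx => hS.isStrictlyPositive.spectrum_pos hx
  refine ⟨c, hc, fun v => ?_⟩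
  have := (Matrix.le_iff.1 hcS).dotProduct_mulVec_nonneg v
  simpa [sub_mulVec, Algebra.algebraMap_eq_smul_one, smul_mulVec, dotProduct_sub] using this

theorem PosDef.inv_mul_mul_inv [DecidableEq ι] {A B : Matrix ι ι ℝ} (hA : A.PosDef)
    (hB : B.PosDef) : (B⁻¹ * A * B⁻¹).PosDef := by
  simpa only [hB.inv.isHermitian.eq] using
    hA.conjTranspose_mul_mul_same (mulVec_injective_of_isUnit hB.inv.isUnit)

theorem dotProduct_transpose_mul_mul_mulVec (P : Matrix κ ι ℝ) (S : Matrix κ κ ℝ)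
    (b : ι → ℝ) :
    b ⬝ᵥ (Pᵀ * S * P) *ᵥ b = (P *ᵥ b) ⬝ᵥ S *ᵥ (P *ᵥ b) := by
  rw [← mulVec_mulVec, ← mulVec_mulVec, dotProduct_mulVec, vecMul_transpose]

theorem dotProduct_transpose_mul_mulVec (P : Matrix κ ι ℝ) (b : ι → ℝ) :
    b ⬝ᵥ (Pᵀ * P) *ᵥ b = (P *ᵥ b) ⬝ᵥ (P *ᵥ b) := by
  rw [← mulVec_mulVec, dotProduct_mulVec, vecMul_transpose]

theorem dotProduct_sum_mulVec {σ : Type*} (s : Finset σ) (M : σ → Matrix ι ι ℝ) (b : ι → ℝ) :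
    b ⬝ᵥ (∑ i ∈ s, M i) *ᵥ b = ∑ i ∈ s, b ⬝ᵥ M i *ᵥ b := by
  rw [sum_mulVec, dotProduct_sum]

theorem mul_dotProduct_self_le_diagonal_mulVec [DecidableEq κ] {a : ℝ} {d : κ → ℝ}
    (hd : ∀ j, a ≤ d j ^ 2) (w : κ → ℝ) :
    a * (w ⬝ᵥ w) ≤ (diagonal d *ᵥ w) ⬝ᵥ (diagonal d *ᵥ w) := by
  simp only [dotProduct, mulVec_diagonal, Finset.mul_sum]
  exact Finset.sum_le_sum fun j _ => by nlinarith [hd j, mul_self_nonneg (w j)]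

theorem mul_dotProduct_self_le_conj_diagonal [DecidableEq κ] {S : Matrix κ κ ℝ} {c a : ℝ}
    (hc : 0 ≤ c) (hS : ∀ v, c * (v ⬝ᵥ v) ≤ v ⬝ᵥ S *ᵥ v) {d : κ → ℝ} (hd : ∀ j, a ≤ d j ^ 2)
    (P : Matrix κ ι ℝ) (b : ι → ℝ) :
    c * a * ((P *ᵥ b) ⬝ᵥ (P *ᵥ b)) ≤
      b ⬝ᵥ (Pᵀ * diagonal d * S * diagonal d * P) *ᵥ b := by
  have hconj :
      Pᵀ * diagonal d * S * diagonal d * P = (diagonal d * P)ᵀ * S * (diagonal d * P) := by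
    simp only [transpose_mul, diagonal_transpose, Matrix.mul_assoc]
  rw [hconj, dotProduct_transpose_mul_mul_mulVec, ← mulVec_mulVec, mul_assoc]
  exact (mul_le_mul_of_nonneg_left (mul_dotProduct_self_le_diagonal_mulVec hd _) hc).trans (hS _)

end Matrix

namespace TensorGEE

open MeasureTheory Filter Topology Matrix ProbabilityTheory

variable {D m R : ℕ} {p : Fin D → ℕ}

theorem natCast_mul_dotProduct_Imat_mulVec (X : ℕ → Fin m → Idx p → ℝ) (n : ℕ)
    (β : Param p R) (b : PIdx p R → ℝ) :
    n * (b ⬝ᵥ Imat X n β *ᵥ b) =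
      ∑ i ∈ Finset.range n,
        (((vecX (X i))ᵀ * Jmat β) *ᵥ b) ⬝ᵥ (((vecX (X i))ᵀ * Jmat β) *ᵥ b) := by
  rcases eq_or_ne n 0 with rfl | hn
  · simp
  rw [Imat, smul_mulVec, dotProduct_smul, smul_eq_mul,
    mul_inv_cancel_left₀ (Nat.cast_ne_zero.2 hn), dotProduct_sum_mulVec]
  refine Finset.sum_congr rfl fun i _ => ?_
  rw [← dotProduct_transpose_mul_mulVec, transpose_mul, transpose_transpose]
  simp only [Matrix.mul_assoc]

theorem dotProduct_Imat_mulVec_le_dotProduct_Mtilde_mulVec (μ : ℝ → ℝ)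
    (X : ℕ → Fin m → Idx p → ℝ) {R0 Rtil : Matrix (Fin m) (Fin m) ℝ} {c a : ℝ} (hc : 0 ≤ c)
    (hS : ∀ v, c * (v ⬝ᵥ v) ≤ v ⬝ᵥ (Rtil⁻¹ * R0 * Rtil⁻¹) *ᵥ v) (ha : 0 ≤ a) (n : ℕ)
    (β : Param p R) (hσ : ∀ i < n, ∀ j, a ≤ sigma2 μ (X i j) β) (b : PIdx p R → ℝ) :
    c * a * (n * (b ⬝ᵥ Imat X n β *ᵥ b)) ≤ b ⬝ᵥ Mtilde μ X R0 Rtil n β *ᵥ b := by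
  rw [natCast_mul_dotProduct_Imat_mulVec, Finset.mul_sum, Mtilde, dotProduct_sum_mulVec]
  refine Finset.sum_le_sum fun i hi => ?_
  have hd : ∀ j, a ≤ Real.sqrt (sigma2 μ (X i j) β) ^ 2 := fun j => by
    have hσij := hσ i (Finset.mem_range.1 hi) j
    rwa [Real.sq_sqrt (ha.trans hσij)]
  refine (mul_dotProduct_self_le_conj_diagonal hc hS hd ((vecX (X i))ᵀ * Jmat β) b).trans_eq ?_
  simp only [Asqrt, transpose_mul, transpose_transpose, Matrix.mul_assoc]

theorem tensorGEE_Mtilde_eigenvalue_lower_bound_general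
    {D m R : ℕ} (p : ℕ → Fin D → ℕ) (pn : ℕ → ℕ)
    (μ : ℝ → ℝ)
    (X : (n : ℕ) → ℕ → Fin m → Idx (p n) → ℝ)
    (β0 : (n : ℕ) → Param (p n) R)
    (R0 : Matrix (Fin m) (Fin m) ℝ)
    (Rtil : Matrix (Fin m) (Fin m) ℝ)
    -- (A3*) eigenvalues of `I(β)` bounded between `c₁` and `c₂`
    -- on the ball `‖β − β₀‖ ≤ Δ √(p_n/n)`
    (hA3 : ∃ Δ : ℝ, 0 < Δ ∧ ∃ c1 c2 : ℝ, 0 < c1 ∧ c1 < c2 ∧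
      ∀ n : ℕ, 0 < n →
        ∀ β : Param (p n) R,
          vnorm (β - β0 n) ≤ Δ * Real.sqrt ((pn n : ℝ) / n) →
          (∀ u : PIdx (p n) R → ℝ,
            c1 * (∑ k, u k ^ 2) ≤ u ⬝ᵥ (Imat (X n) n β).mulVec u) ∧
          (∀ u : PIdx (p n) R → ℝ,
            u ⬝ᵥ (Imat (X n) n β).mulVec u ≤ c2 * (∑ k, u k ^ 2)))
    -- (A4*) `R₀` and `R̃` positive definite
    -- (eigenvalues bounded away from 0 and ∞, `m` fixed)
    (hR0 : R0.PosDef) (hRtil : Rtil.PosDef)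
    -- (A8*) `μ'` bounded away from 0 and ∞ near the truth
    (hA8 : ∃ Δ : ℝ, 0 < Δ ∧ ∃ a b : ℝ, 0 < a ∧
      ∀ n : ℕ, 0 < n → ∀ β : Param (p n) R,
        vnorm (β - β0 n) ≤ Δ * Real.sqrt ((pn n : ℝ) / n) → ∀ i < n, ∀ j,
        a ≤ deriv μ (theta (X n i j) β) ∧ deriv μ (theta (X n i j) β) ≤ b) :
    ∃ C : ℝ, 0 < C ∧ ∃ N : ℕ, ∀ n ≥ N,
      ∀ b : PIdx (p n) R → ℝ, (∑ k, b k ^ 2) = 1 →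
        C * n ≤ b ⬝ᵥ (Mtilde μ (X n) R0 Rtil n (β0 n)).mulVec b := by
  obtain ⟨Δ, hΔ, c1, _, hc1, -, hI⟩ := hA3
  obtain ⟨Δ', hΔ', a, _, ha, hμ'⟩ := hA8
  obtain ⟨c, hc, hS⟩ := (hR0.inv_mul_mul_inv hRtil).exists_pos_mul_dotProduct_self_le
  refine ⟨c * a * c1, by positivity, 1, fun n hn b hb => ?_⟩
  have hn0 : 0 < n := hn
  have hβ0_mem_ball : ∀ r > 0, vnorm (β0 n - β0 n) ≤ r * Real.sqrt ((pn n : ℝ) / n) :=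
    fun r hr => by
      rw [show vnorm (β0 n - β0 n) = 0 by simp [vnorm]]
      positivity
  have hIb : c1 ≤ b ⬝ᵥ Imat (X n) n (β0 n) *ᵥ b := by
    simpa [hb] using (hI n hn0 (β0 n) (hβ0_mem_ball Δ hΔ)).1 b
  have hσ : ∀ i < n, ∀ j, a ≤ sigma2 μ (X n i j) (β0 n) := fun i hi j =>
    (hμ' n hn0 (β0 n) (hβ0_mem_ball Δ' hΔ') i hi j).1
  calc c * a * c1 * n = c * a * (n * c1) := by ring
    _ ≤ c * a * (n * (b ⬝ᵥ Imat (X n) n (β0 n) *ᵥ b)) := by gcongr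
    _ ≤ _ :=
      dotProduct_Imat_mulVec_le_dotProduct_Mtilde_mulVec μ (X n) hc.le hS ha.le n (β0 n) hσ b

/-- Lower eigenvalue bound for `M̃_n(β₀)`: under conditions (A1*), (A3*), (A4*)
and (A8*), there is a constant `C > 0` such that for all sufficiently large `n`
and every Euclidean-unit vector `b`, `bᵀ M̃_n(β₀) b ≥ C n`; equivalently
`λ_min(M̃_n(β₀)) ≥ C n`, so `λ_min^{-1}(M̃_n(β₀)) = O(n⁻¹)`. -/
theorem tensorGEE_Mtilde_eigenvalue_lower_bound
    {D m R : ℕ} (p : ℕ → Fin D → ℕ) (pn : ℕ → ℕ)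
    (μ : ℝ → ℝ)
    (X : (n : ℕ) → ℕ → Fin m → Idx (p n) → ℝ)
    (β0 : (n : ℕ) → Param (p n) R)
    (R0 : Matrix (Fin m) (Fin m) ℝ)
    (Rtil : Matrix (Fin m) (Fin m) ℝ)
    -- `p_d ∼ p_n` for every mode `d`
    (hpsim : ∃ C : ℝ, 0 < C ∧ ∀ n d,
      (p n d : ℝ) ≤ C * pn n ∧ (pn n : ℝ) ≤ C * p n d)
    -- (A1*) uniformly bounded covariate entries
    (hA1 : ∃ C : ℝ, ∀ n, ∀ i < n, ∀ j idx, |X n i j idx| ≤ C)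
    -- (A3*) eigenvalues of `I(β)` bounded between `c₁` and `c₂`
    -- on the ball `‖β − β₀‖ ≤ Δ √(p_n/n)`
    (hA3 : ∃ Δ : ℝ, 0 < Δ ∧ ∃ c1 c2 : ℝ, 0 < c1 ∧ c1 < c2 ∧
      ∀ n : ℕ, 0 < n →
        ∀ β : Param (p n) R,
          vnorm (β - β0 n) ≤ Δ * Real.sqrt ((pn n : ℝ) / n) →
          (∀ u : PIdx (p n) R → ℝ,
            c1 * (∑ k, u k ^ 2) ≤ u ⬝ᵥ (Imat (X n) n β).mulVec u) ∧
          (∀ u : PIdx (p n) R → ℝ,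
            u ⬝ᵥ (Imat (X n) n β).mulVec u ≤ c2 * (∑ k, u k ^ 2)))
    -- (A4*) `R₀` and `R̃` positive definite
    -- (eigenvalues bounded away from 0 and ∞, `m` fixed)
    (hR0 : R0.PosDef) (hRtil : Rtil.PosDef)
    -- (A8*) `μ'` bounded away from 0 and ∞ near the truth
    (hA8 : ∃ Δ : ℝ, 0 < Δ ∧ ∃ a b : ℝ, 0 < a ∧
      ∀ n : ℕ, 0 < n → ∀ β : Param (p n) R,
        vnorm (β - β0 n) ≤ Δ * Real.sqrt ((pn n : ℝ) / n) → ∀ i < n, ∀ j,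
        a ≤ deriv μ (theta (X n i j) β) ∧ deriv μ (theta (X n i j) β) ≤ b) :
    ∃ C : ℝ, 0 < C ∧ ∃ N : ℕ, ∀ n ≥ N,
      ∀ b : PIdx (p n) R → ℝ, (∑ k, b k ^ 2) = 1 →
        C * n ≤ b ⬝ᵥ (Mtilde μ (X n) R0 Rtil n (β0 n)).mulVec b :=
  tensorGEE_Mtilde_eigenvalue_lower_bound_general p pn μ X β0 R0 Rtil hA3 hR0 hRtil hA8

end TensorGEE
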